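/- Let f : ℚ₂ × [0,1] → ℝ satisfy: (a) for each r ∈ ℚ₂ there is a_r ∈ L²([0,1]) with f(r,t) = r + ∫₀ᵗ a_r(s) ds for all t ∈ [0,1]; (b) monotonicity: r₁ ≤ r₂ implies f(r₁,t) ≤ f(r₂,t) for all t; (c) coalescence: if f(r₁,t₀) = f(r₂,t₀) for some t₀ ∈ [0,1], then f(r₁,t) = f(r₂,t) for all t ∈ [t₀,1]. For r₁ < r₂ in ℚ₂ put τ(r₁,r₂) = min(inf{t ∈ [0,1] : f(r₁,t) = f(r₂,t)}, 1), and define I_n(f) = (1/2)[∫₀¹ a_0(s)² ds + Σ_{k=1}^{2^n} ∫₀^{τ((k−1)2^{−n}, k·2^{−n})} a_{k·2^{−n}}(s)² ds]. Then the sequence (I_n(f))_{n≥1} is nondecreasing: I_n(f) ≤ I_{n+1}(f) for all n ≥ 1. -/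

import Mathlib

open MeasureTheory Filter Topology

noncomputable section

/-- The set `ℚ₂ = {k/2^n : n ≥ 1, 0 ≤ k ≤ 2^n}` of dyadic rational points of `[0,1]`. -/
def dyadics : Set ℝ :=
  {x | ∃ n : ℕ, 1 ≤ n ∧ ∃ k : ℕ, k ≤ 2 ^ n ∧ x = (k : ℝ) / 2 ^ n}

/-- The coalescence time `τ(r₁,r₂) = min(inf {t ∈ [0,1] : f(r₁,t) = f(r₂,t)}, 1)`,
with the convention `inf ∅ = +∞` (realized by adjoining `1` to the set). -/
def coalTime (f : ℝ → ℝ → ℝ) (r₁ r₂ : ℝ) : ℝ :=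
  sInf ({t | t ∈ Set.Icc (0 : ℝ) 1 ∧ f r₁ t = f r₂ t} ∪ {1})

/-- The `n`-th level approximate rate functional
`Iₙ(f) = (1/2)[∫₀¹ a₀² + Σ_{k=1}^{2ⁿ} ∫₀^{τ((k−1)2⁻ⁿ, k2⁻ⁿ)} a_{k2⁻ⁿ}²]`. -/
def levelRate (a : ℝ → ℝ → ℝ) (f : ℝ → ℝ → ℝ) (n : ℕ) : ℝ :=
  (1 / 2) * ((∫ s in (0 : ℝ)..1, (a 0 s) ^ 2) +
    ∑ k ∈ Finset.Icc (1 : ℕ) (2 ^ n),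
      ∫ s in (0 : ℝ)..(coalTime f (((k : ℝ) - 1) / 2 ^ n) ((k : ℝ) / 2 ^ n)),
        (a ((k : ℝ) / 2 ^ n) s) ^ 2)

/-!
Passing from level `n` to level `n + 1` splits each dyadic interval `[r₀, r₂]` at its midpoint
`r₁`, and it suffices to show
`∫₀^{τ(r₀,r₂)} a_{r₂}² ≤ ∫₀^{τ(r₀,r₁)} a_{r₁}² + ∫₀^{τ(r₁,r₂)} a_{r₂}²`.
Since paths agree after their coalescence times, `τ(r₀,r₂) ≤ max (τ(r₀,r₁)) (τ(r₁,r₂))`; and as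
the paths from `r₁` and `r₂` coincide after `τ(r₁,r₂)`, the Lebesgue differentiation theorem gives
`a_{r₁} = a_{r₂}` a.e. there. Hence either `τ(r₀,r₂) ≤ τ(r₁,r₂)`, or the excess
`∫_{τ(r₁,r₂)}^{τ(r₀,r₂)} a_{r₂}²` is an integral of `a_{r₁}²` over a subinterval of `[0, τ(r₀,r₁)]`.
-/

open Set

theorem ae_eq_of_integral_eq_add_const {g₁ g₂ : ℝ → ℝ} {a b d : ℝ} {U : Set ℝ} (hU : IsOpen U)
    (h₁ : IntervalIntegrable g₁ volume a b) (h₂ : IntervalIntegrable g₂ volume a b)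
    (hconst : ∀ x ∈ U, ∫ t in a..x, g₁ t = (∫ t in a..x, g₂ t) + d) :
    ∀ᵐ x, x ∈ U → x ∈ uIcc a b → g₁ x = g₂ x := by
  filter_upwards [h₁.ae_hasDerivAt_integral, h₂.ae_hasDerivAt_integral] with x hx₁ hx₂ hxU hx
  exact (hx₁ hx a left_mem_uIcc).unique <|
    ((hx₂ hx a left_mem_uIcc).add_const d).congr_of_eventuallyEq
      (Filter.eventually_of_mem (hU.mem_nhds hxU) hconst)

theorem intervalIntegral_le_add_of_ae_eq {φ ψ : ℝ → ℝ} {b s u T : ℝ}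
    (hφ : ∀ x, 0 ≤ φ x) (hψ : ∀ x, 0 ≤ ψ x)
    (hφi : IntervalIntegrable φ volume 0 b) (hψi : IntervalIntegrable ψ volume 0 b)
    (hs : s ∈ Icc 0 b) (hu : u ∈ Icc 0 b) (hT : T ∈ Icc 0 b) (hTmax : T ≤ max u s)
    (heq : ∀ᵐ x, x ∈ Ioo s b → φ x = ψ x) :
    ∫ x in (0 : ℝ)..T, ψ x ≤ (∫ x in (0 : ℝ)..u, φ x) + ∫ x in (0 : ℝ)..s, ψ x := by
  have hφu : 0 ≤ ∫ x in (0 : ℝ)..u, φ x := intervalIntegral.integral_nonneg hu.1 fun x _ => hφ x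
  have h₀ : (0 : ℝ) ∈ Icc 0 b := left_mem_Icc.2 (hs.1.trans hs.2)
  have hsub : ∀ {c d}, c ∈ Icc 0 b → d ∈ Icc 0 b → uIcc c d ⊆ uIcc 0 b := fun hc hd =>
    uIcc_subset_uIcc (by rwa [uIcc_of_le (hc.1.trans hc.2)]) (by rwa [uIcc_of_le (hd.1.trans hd.2)])
  rcases le_or_gt T s with hTs | hsT
  · have hψT : ∫ x in (0 : ℝ)..T, ψ x ≤ ∫ x in (0 : ℝ)..s, ψ x :=
      intervalIntegral.integral_mono_interval le_rfl hT.1 hTs (.of_forall hψ)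
        (hψi.mono_set (hsub h₀ hs))
    linarith
  · have hTu : T ≤ u := by simpa [hsT.not_ge] using hTmax
    have hb : ∀ᵐ x : ℝ, x ≠ b := by simp [ae_iff, measure_singleton]
    have hcongr : ∫ x in s..T, ψ x = ∫ x in s..T, φ x := by
      refine intervalIntegral.integral_congr_ae ?_
      filter_upwards [heq, hb] with x hx hxb hxsT
      rw [uIoc_of_le hsT.le] at hxsT
      exact (hx ⟨hxsT.1, lt_of_le_of_ne (hxsT.2.trans hT.2) hxb⟩).symm
    have hφsT : ∫ x in s..T, φ x ≤ ∫ x in (0 : ℝ)..u, φ x :=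
      intervalIntegral.integral_mono_interval hs.1 hsT.le hTu (.of_forall hφ)
        (hφi.mono_set (hsub h₀ hu))
    have hsplit := intervalIntegral.integral_add_adjacent_intervals
      (hψi.mono_set (hsub h₀ hs)) (hψi.mono_set (hsub hs hT))
    linarith

def IsL2Primitive (γ α : ℝ → ℝ) (x₀ : ℝ) : Prop :=
  MemLp α 2 (volume.restrict (Icc (0 : ℝ) 1)) ∧
    ∀ t ∈ Icc (0 : ℝ) 1, γ t = x₀ + ∫ s in (0 : ℝ)..t, α s

namespace IsL2Primitive

variable {γ γ₁ γ₂ α α₁ α₂ : ℝ → ℝ} {x₀ x₁ x₂ : ℝ}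

lemma intervalIntegrable (h : IsL2Primitive γ α x₀) : IntervalIntegrable α volume 0 1 :=
  (intervalIntegrable_iff_integrableOn_Icc_of_le zero_le_one).2 (h.1.integrable one_le_two)

lemma intervalIntegrable_sq (h : IsL2Primitive γ α x₀) :
    IntervalIntegrable (fun s => α s ^ 2) volume 0 1 :=
  (intervalIntegrable_iff_integrableOn_Icc_of_le zero_le_one).2 h.1.integrable_sq

lemma continuousOn (h : IsL2Primitive γ α x₀) : ContinuousOn γ (Icc 0 1) := by
  have hprim := intervalIntegral.continuousOn_primitive_interval (a := 0) (b := 1)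
    ((intervalIntegrable_iff' (μ := volume)).1 h.intervalIntegrable)
  rw [uIcc_of_le zero_le_one] at hprim
  exact (continuousOn_const.add hprim).congr h.2

lemma ae_eq_of_eqOn (h₁ : IsL2Primitive γ₁ α₁ x₁) (h₂ : IsL2Primitive γ₂ α₂ x₂) {s : ℝ}
    (hs : 0 ≤ s) (heq : EqOn γ₁ γ₂ (Ico s 1)) : ∀ᵐ x, x ∈ Ioo s 1 → α₁ x = α₂ x := by
  have hconst : ∀ x ∈ Ioo s 1, ∫ t in (0 : ℝ)..x, α₁ t = (∫ t in (0 : ℝ)..x, α₂ t) + (x₂ - x₁) := by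
    intro x hx
    have hx' : x ∈ Icc (0 : ℝ) 1 := ⟨hs.trans hx.1.le, hx.2.le⟩
    have := heq (Ioo_subset_Ico_self hx)
    rw [h₁.2 x hx', h₂.2 x hx'] at this
    linarith
  filter_upwards [ae_eq_of_integral_eq_add_const isOpen_Ioo h₁.intervalIntegrable
    h₂.intervalIntegrable hconst] with x hx hxU
  rw [uIcc_of_le zero_le_one] at hx
  exact hx hxU ⟨hs.trans hxU.1.le, hxU.2.le⟩

end IsL2Primitive

section Coalescence

variable {f a : ℝ → ℝ → ℝ} {r₀ r₁ r₂ : ℝ}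

def coalSet (f : ℝ → ℝ → ℝ) (r₁ r₂ : ℝ) : Set ℝ :=
  {t | t ∈ Icc (0 : ℝ) 1 ∧ f r₁ t = f r₂ t} ∪ {1}

lemma coalSet_subset_Icc : coalSet f r₁ r₂ ⊆ Icc 0 1 := by
  rintro t (ht | rfl)
  exacts [ht.1, right_mem_Icc.2 zero_le_one]

lemma isClosed_coalSet (h₁ : ContinuousOn (f r₁) (Icc 0 1))
    (h₂ : ContinuousOn (f r₂) (Icc 0 1)) : IsClosed (coalSet f r₁ r₂) :=
  ((h₁.prodMk h₂).preimage_isClosed_of_isClosed isClosed_Icc isClosed_diagonal).union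
    isClosed_singleton

lemma coalTime_mem_Icc (f : ℝ → ℝ → ℝ) (r₁ r₂ : ℝ) : coalTime f r₁ r₂ ∈ Icc (0 : ℝ) 1 :=
  ⟨le_csInf ⟨1, Or.inr rfl⟩ fun _ ht => (coalSet_subset_Icc ht).1,
    csInf_le (bddBelow_Icc.mono coalSet_subset_Icc) (Or.inr rfl)⟩

lemma coalTime_le {t : ℝ} (ht : t ∈ Icc (0 : ℝ) 1) (heq : f r₁ t = f r₂ t) :
    coalTime f r₁ r₂ ≤ t :=
  csInf_le (bddBelow_Icc.mono coalSet_subset_Icc) (Or.inl ⟨ht, heq⟩)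

/-- By continuity the infimum defining `coalTime` is attained unless it is the adjoined point `1`;
coalescence then propagates the equality. -/
lemma eqOn_Ico_coalTime (h₁ : ContinuousOn (f r₁) (Icc 0 1)) (h₂ : ContinuousOn (f r₂) (Icc 0 1))
    (hcoal : ∀ t₀ ∈ Icc (0 : ℝ) 1, f r₁ t₀ = f r₂ t₀ → ∀ t ∈ Icc t₀ 1, f r₁ t = f r₂ t) :
    EqOn (f r₁) (f r₂) (Ico (coalTime f r₁ r₂) 1) := by
  intro t ht
  rcases (isClosed_coalSet h₁ h₂).csInf_mem ⟨1, Or.inr rfl⟩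
    (bddBelow_Icc.mono coalSet_subset_Icc) with hmem | hone
  · exact hcoal _ hmem.1 hmem.2 t ⟨ht.1, ht.2.le⟩
  · exact absurd hone (ht.1.trans_lt ht.2).ne

lemma coalTime_le_max (h₀₁ : EqOn (f r₀) (f r₁) (Ico (coalTime f r₀ r₁) 1))
    (h₁₂ : EqOn (f r₁) (f r₂) (Ico (coalTime f r₁ r₂) 1)) :
    coalTime f r₀ r₂ ≤ max (coalTime f r₀ r₁) (coalTime f r₁ r₂) := by
  set m := max (coalTime f r₀ r₁) (coalTime f r₁ r₂)
  rcases lt_or_ge m 1 with hm | hm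
  · have hm₀ : 0 ≤ m := (coalTime_mem_Icc f r₀ r₁).1.trans (le_max_left _ _)
    exact coalTime_le ⟨hm₀, hm.le⟩
      ((h₀₁ ⟨le_max_left _ _, hm⟩).trans (h₁₂ ⟨le_max_right _ _, hm⟩))
  · exact (coalTime_mem_Icc f r₀ r₂).2.trans hm

theorem integral_sq_coalTime_le (h₁ : IsL2Primitive (f r₁) (a r₁) r₁)
    (h₂ : IsL2Primitive (f r₂) (a r₂) r₂)
    (h₀₁ : EqOn (f r₀) (f r₁) (Ico (coalTime f r₀ r₁) 1))
    (h₁₂ : EqOn (f r₁) (f r₂) (Ico (coalTime f r₁ r₂) 1)) :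
    ∫ s in (0 : ℝ)..coalTime f r₀ r₂, a r₂ s ^ 2 ≤
      (∫ s in (0 : ℝ)..coalTime f r₀ r₁, a r₁ s ^ 2) +
        ∫ s in (0 : ℝ)..coalTime f r₁ r₂, a r₂ s ^ 2 := by
  refine intervalIntegral_le_add_of_ae_eq (fun _ => sq_nonneg _) (fun _ => sq_nonneg _)
    h₁.intervalIntegrable_sq h₂.intervalIntegrable_sq (coalTime_mem_Icc f r₁ r₂)
    (coalTime_mem_Icc f r₀ r₁) (coalTime_mem_Icc f r₀ r₂) (coalTime_le_max h₀₁ h₁₂) ?_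
  filter_upwards [h₁.ae_eq_of_eqOn h₂ (coalTime_mem_Icc f r₁ r₂).1 h₁₂] with x hx hxs
  rw [hx hxs]

end Coalescence

theorem sum_Icc_two_mul {M : Type*} [AddCommMonoid M] (m : ℕ) (g : ℕ → M) :
    ∑ j ∈ Finset.Icc 1 (2 * m), g j = ∑ k ∈ Finset.Icc 1 m, (g (2 * k - 1) + g (2 * k)) := by
  induction m with
  | zero => simp
  | succ m ih =>
    rw [show 2 * (m + 1) = 2 * m + 1 + 1 by ring, Finset.sum_Icc_succ_top (by omega),
      Finset.sum_Icc_succ_top (by omega), Finset.sum_Icc_succ_top (by omega), ih,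
      show 2 * (m + 1) - 1 = 2 * m + 1 by omega, add_assoc]
    rfl

def levelTerm (a f : ℝ → ℝ → ℝ) (n k : ℕ) : ℝ :=
  ∫ s in (0 : ℝ)..(coalTime f (((k : ℝ) - 1) / 2 ^ n) ((k : ℝ) / 2 ^ n)),
    (a ((k : ℝ) / 2 ^ n) s) ^ 2

lemma levelRate_eq (a f : ℝ → ℝ → ℝ) (n : ℕ) :
    levelRate a f n =
      (1 / 2) * ((∫ s in (0 : ℝ)..1, (a 0 s) ^ 2) +
        ∑ k ∈ Finset.Icc 1 (2 ^ n), levelTerm a f n k) :=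
  rfl

lemma levelTerm_le_add_levelTerm_succ {f a : ℝ → ℝ → ℝ}
    (hprim : ∀ r ∈ dyadics, IsL2Primitive (f r) (a r) r)
    (heqOn : ∀ r₁ ∈ dyadics, ∀ r₂ ∈ dyadics, EqOn (f r₁) (f r₂) (Ico (coalTime f r₁ r₂) 1))
    {n k : ℕ} (hn : 1 ≤ n) (hk₁ : 1 ≤ k) (hk₂ : k ≤ 2 ^ n) :
    levelTerm a f n k ≤ levelTerm a f (n + 1) (2 * k - 1) + levelTerm a f (n + 1) (2 * k) := by
  have hmid : ((2 * k - 1 : ℕ) : ℝ) = 2 * k - 1 := by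
    rw [Nat.cast_sub (by omega)]
    push_cast
    ring
  have h₀ : ((k : ℝ) - 1) / 2 ^ n ∈ dyadics :=
    ⟨n, hn, k - 1, by omega, by rw [Nat.cast_sub hk₁, Nat.cast_one]⟩
  have h₁ : ((2 * k - 1 : ℕ) : ℝ) / 2 ^ (n + 1) ∈ dyadics :=
    ⟨n + 1, by omega, 2 * k - 1, by rw [pow_succ]; omega, rfl⟩
  have h₂ : (k : ℝ) / 2 ^ n ∈ dyadics := ⟨n, hn, k, hk₂, rfl⟩
  have e₀ : (((2 * k - 1 : ℕ) : ℝ) - 1) / 2 ^ (n + 1) = ((k : ℝ) - 1) / 2 ^ n := by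
    rw [hmid, pow_succ]
    field_simp
    ring
  have e₁ : (((2 * k : ℕ) : ℝ) - 1) / 2 ^ (n + 1) = ((2 * k - 1 : ℕ) : ℝ) / 2 ^ (n + 1) := by
    rw [hmid]
    push_cast
    ring
  have e₂ : ((2 * k : ℕ) : ℝ) / 2 ^ (n + 1) = (k : ℝ) / 2 ^ n := by
    rw [pow_succ]
    push_cast
    field_simp
  simp only [levelTerm, e₀, e₁, e₂]
  exact integral_sq_coalTime_le (hprim _ h₁) (hprim _ h₂) (heqOn _ h₀ _ h₁) (heqOn _ h₁ _ h₂)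

theorem levelRate_monotone_general
    (f : ℝ → ℝ → ℝ) (a : ℝ → ℝ → ℝ)
    (ha : ∀ r ∈ dyadics,
      MemLp (a r) 2 (volume.restrict (Set.Icc (0 : ℝ) 1)) ∧
      ∀ t ∈ Set.Icc (0 : ℝ) 1, f r t = r + ∫ s in (0 : ℝ)..t, a r s)
    (hcoal : ∀ r₁ ∈ dyadics, ∀ r₂ ∈ dyadics, ∀ t₀ ∈ Set.Icc (0 : ℝ) 1,
      f r₁ t₀ = f r₂ t₀ → ∀ t ∈ Set.Icc t₀ 1, f r₁ t = f r₂ t) :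
    ∀ n : ℕ, 1 ≤ n → levelRate a f n ≤ levelRate a f (n + 1) := by
  intro n hn
  have hprim : ∀ r ∈ dyadics, IsL2Primitive (f r) (a r) r := ha
  have heqOn : ∀ r₁ ∈ dyadics, ∀ r₂ ∈ dyadics, EqOn (f r₁) (f r₂) (Ico (coalTime f r₁ r₂) 1) :=
    fun r₁ h₁ r₂ h₂ => eqOn_Ico_coalTime (hprim r₁ h₁).continuousOn (hprim r₂ h₂).continuousOn
      (hcoal r₁ h₁ r₂ h₂)
  rw [levelRate_eq, levelRate_eq, pow_succ', sum_Icc_two_mul]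
  gcongr with k hk
  obtain ⟨hk₁, hk₂⟩ := Finset.mem_Icc.1 hk
  exact levelTerm_le_add_levelTerm_succ hprim heqOn hn hk₁ hk₂

/-- **Monotonicity of the approximate rate functionals.** For a coalescing family of
absolutely continuous dyadic paths, the sequence `(Iₙ(f))` is nondecreasing. -/
theorem levelRate_monotone
    (f : ℝ → ℝ → ℝ) (a : ℝ → ℝ → ℝ)
    (ha : ∀ r ∈ dyadics,
      MemLp (a r) 2 (volume.restrict (Set.Icc (0 : ℝ) 1)) ∧
      ∀ t ∈ Set.Icc (0 : ℝ) 1, f r t = r + ∫ s in (0 : ℝ)..t, a r s)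
    (hmono : ∀ r₁ ∈ dyadics, ∀ r₂ ∈ dyadics, r₁ ≤ r₂ →
      ∀ t ∈ Set.Icc (0 : ℝ) 1, f r₁ t ≤ f r₂ t)
    (hcoal : ∀ r₁ ∈ dyadics, ∀ r₂ ∈ dyadics, ∀ t₀ ∈ Set.Icc (0 : ℝ) 1,
      f r₁ t₀ = f r₂ t₀ → ∀ t ∈ Set.Icc t₀ 1, f r₁ t = f r₂ t) :
    ∀ n : ℕ, 1 ≤ n → levelRate a f n ≤ levelRate a f (n + 1) :=
  levelRate_monotone_general f a ha hcoal

end
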